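/- arXiv:2408.12858 — 5 statements merged into one kernel-verified Lean document; each statement's English description precedes it below -/
import Mathlib

section
/- Let n ≥ 1 and a, b, x, y ∈ ℂⁿ. Set v₁ = (1,0,a), v₂ = (0,1,b), w₁ = (0,0,x), w₂ = (0,0,y) ∈ ℂ^{n+2}. Then Gram(v₁, v₂, w₁, w₂) = Gram(x,y) + Gram(x,y,a) + Gram(x,y,b) + Gram(x,y,a,b). (Applied with a = F₁(z), b = F₂(z), x = F₁′(z), y = F₂′(z), this shows that ‖v₁∧v₂∧∂v₁∧∂v₂‖² = ‖∂F₁∧∂F₂‖² + ‖∂F₁∧∂F₂∧F₁‖² + ‖∂F₁∧∂F₂∧F₂‖² + ‖∂F₁∧∂F₂∧F₁∧F₂‖².) -/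
open scoped BigOperators
open Complex

noncomputable def hinner {m : ℕ} (u w : Fin m → ℂ) : ℂ :=
  ∑ i, u i * (starRingEnd ℂ) (w i)

noncomputable def gram {m k : ℕ} (v : Fin k → Fin m → ℂ) : ℂ :=
  Matrix.det (Matrix.of fun i j : Fin k => hinner (v i) (v j))

noncomputable def vOne {n : ℕ} (F : ℂ → Fin n → ℂ) (z : ℂ) : Fin (n + 2) → ℂ :=
  Fin.cons 1 (Fin.cons 0 (F z))

noncomputable def vTwo {n : ℕ} (F : ℂ → Fin n → ℂ) (z : ℂ) : Fin (n + 2) → ℂ :=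
  Fin.cons 0 (Fin.cons 1 (F z))

def IsPolyMap {n : ℕ} (F : ℂ → Fin n → ℂ) : Prop :=
  ∀ i : Fin n, ∃ p : Polynomial ℂ, ∀ z : ℂ, F z i = Polynomial.eval z p

def CondA {n : ℕ} (d : ℕ) (F₁ F₂ : ℂ → Fin n → ℂ) : Prop :=
  ∀ z : ℂ,
    1 + hinner (F₁ z) (F₁ z) + hinner (F₂ z) (F₂ z) +
      (hinner (F₁ z) (F₁ z) * hinner (F₂ z) (F₂ z) -
        hinner (F₁ z) (F₂ z) * (starRingEnd ℂ) (hinner (F₁ z) (F₂ z))) =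
    (1 + (Complex.normSq z : ℂ)) ^ d

def CondB {n : ℕ} (d : ℕ) (c : ℝ) (F₁ F₂ : ℂ → Fin n → ℂ) : Prop :=
  ∀ z : ℂ,
    gram ![vOne F₁ z, vTwo F₂ z, deriv (vOne F₁) z, deriv (vTwo F₂) z] =
      (c : ℂ) * (1 + (Complex.normSq z : ℂ)) ^ (2 * d - 4)

noncomputable def F1t (t : ℝ) (z : ℂ) : Fin 4 → ℂ :=
  ![(|t - 2| : ℝ) * z ^ 3, (Real.sqrt t : ℝ) * z,
    ((Real.sqrt ((3 - t) / (4 - t)) * |t - 2| : ℝ)) * z ^ 2,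
    ((Real.sqrt (t / (4 - t)) : ℝ)) * z ^ 2]

noncomputable def F2t (t : ℝ) (z : ℂ) : Fin 4 → ℂ :=
  ![(Real.sqrt (3 - t) : ℝ) * z ^ 2, 0, (Real.sqrt (4 - t) : ℝ) * z, 0]

noncomputable def v1t (t : ℝ) (z : ℂ) : Fin 6 → ℂ := vOne (F1t t) z

noncomputable def v2t (t : ℝ) (z : ℂ) : Fin 6 → ℂ := vTwo (F2t t) z

lemma hinner_cons {m : ℕ} (c d : ℂ) (u w : Fin m → ℂ) :
    hinner (Fin.cons c u) (Fin.cons d w) = c * (starRingEnd ℂ) d + hinner u w := by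
  simp [hinner, Fin.sum_univ_succ]

theorem stmt3 (n : ℕ) (hn : 1 ≤ n) (a b x y : Fin n → ℂ) :
    gram ![(Fin.cons 1 (Fin.cons 0 a) : Fin (n + 2) → ℂ),
           (Fin.cons 0 (Fin.cons 1 b) : Fin (n + 2) → ℂ),
           (Fin.cons 0 (Fin.cons 0 x) : Fin (n + 2) → ℂ),
           (Fin.cons 0 (Fin.cons 0 y) : Fin (n + 2) → ℂ)] =
      gram ![x, y] + gram ![x, y, a] + gram ![x, y, b] + gram ![x, y, a, b] := by
  simp only [gram, hinner_cons, map_one, map_zero, mul_one, mul_zero, one_mul,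
    zero_mul, add_zero, zero_add]
  simp [Matrix.det_succ_row_zero, Fin.sum_univ_succ, Matrix.submatrix, Fin.succAbove]
  norm_num [Fin.lt_def, Fin.succ, Fin.castSucc, Fin.castAdd, Fin.castLE, hinner_cons]
  ring
end

section
/- For every t ∈ (0,3] and every z ∈ ℂ, one has 1 + ‖F₁ᵗ(z)‖² + ‖F₂ᵗ(z)‖² + (‖F₁ᵗ(z)‖²·‖F₂ᵗ(z)‖² − |⟨F₁ᵗ(z), F₂ᵗ(z)⟩|²) = (1+|z|²)⁴. (That is, each member of the family (1.2) satisfies condition (A)₄, so it is a constantly curved holomorphic two-sphere of degree 4 in G(2,6) with constant curvature 1.) -/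
open scoped BigOperators
open Complex

theorem stmt11 (t : ℝ) (ht : t ∈ Set.Ioc (0 : ℝ) 3) (z : ℂ) :
    1 + hinner (F1t t z) (F1t t z) + hinner (F2t t z) (F2t t z) +
      (hinner (F1t t z) (F1t t z) * hinner (F2t t z) (F2t t z) -
        hinner (F1t t z) (F2t t z) * (starRingEnd ℂ) (hinner (F1t t z) (F2t t z))) =
    (1 + (Complex.normSq z : ℂ)) ^ 4 := by
  obtain ⟨ht0, ht3⟩ := ht
  have h0 : (0:ℝ) ≤ t := le_of_lt ht0
  have h3 : (0:ℝ) ≤ 3 - t := by linarith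
  have h4 : (0:ℝ) < 4 - t := by linarith
  set r : ℝ := Complex.normSq z with hr
  have hz : ∀ k : ℕ, z ^ k * (starRingEnd ℂ) z ^ k = ((r : ℂ)) ^ k := by
    intro k
    rw [← mul_pow, Complex.mul_conj]
  have hs6 : Real.sqrt ((3 - t) / (4 - t)) * Real.sqrt (4 - t) = Real.sqrt (3 - t) := by
    rw [← Real.sqrt_mul (by positivity)]
    congr 1
    field_simp
  have hE0 : ((|t - 2| : ℝ) : ℂ) ^ 2 = ((t:ℂ) - 2) ^ 2 := by
    rw [← Complex.ofReal_pow, _root_.sq_abs]; push_cast; ring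
  have hE1 : ((Real.sqrt t : ℝ) : ℂ) ^ 2 = (t:ℂ) := by
    rw [← Complex.ofReal_pow, Real.sq_sqrt h0]
  have hE2 : ((Real.sqrt ((3-t)/(4-t)) * |t-2| : ℝ) : ℂ) ^ 2 =
      ((3-(t:ℂ))/(4-(t:ℂ))) * ((t:ℂ)-2)^2 := by
    rw [← Complex.ofReal_pow, mul_pow, Real.sq_sqrt (by positivity), _root_.sq_abs]
    push_cast; ring
  have hE3 : ((Real.sqrt (t/(4-t)) : ℝ) : ℂ) ^ 2 = (t:ℂ)/(4-(t:ℂ)) := by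
    rw [← Complex.ofReal_pow, Real.sq_sqrt (by positivity)]
    push_cast; ring
  have hE4 : ((Real.sqrt (3-t) : ℝ) : ℂ) ^ 2 = 3 - (t:ℂ) := by
    rw [← Complex.ofReal_pow, Real.sq_sqrt h3]; push_cast; ring
  have hE5 : ((Real.sqrt (4-t) : ℝ) : ℂ) ^ 2 = 4 - (t:ℂ) := by
    rw [← Complex.ofReal_pow, Real.sq_sqrt (le_of_lt h4)]; push_cast; ring
  have hE6 : ((Real.sqrt (3-t) * |t-2| : ℝ) : ℂ) ^ 2 = (3-(t:ℂ)) * ((t:ℂ)-2)^2 := by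
    rw [← Complex.ofReal_pow, mul_pow, Real.sq_sqrt h3, _root_.sq_abs]
    push_cast; ring
  have hA : hinner (F1t t z) (F1t t z) =
      ((t:ℂ)-2)^2 * (r:ℂ)^3 + (t:ℂ) * (r:ℂ) + (3-(t:ℂ))/(4-(t:ℂ)) * ((t:ℂ)-2)^2 * (r:ℂ)^2
        + (t:ℂ)/(4-(t:ℂ)) * (r:ℂ)^2 := by
    simp only [hinner, F1t, Fin.sum_univ_four, Matrix.cons_val_zero, Matrix.cons_val_one,
      Matrix.head_cons, Matrix.cons_val_two, Matrix.tail_cons, Matrix.cons_val_three,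
      map_mul, map_pow, Complex.conj_ofReal]
    linear_combination ((|t-2| : ℝ):ℂ)^2 * hz 3 + ((Real.sqrt t : ℝ):ℂ)^2 * hz 1 +
      (((Real.sqrt ((3-t)/(4-t)) * |t-2| : ℝ):ℂ)^2 + ((Real.sqrt (t/(4-t)) : ℝ):ℂ)^2) * hz 2 +
      (r:ℂ)^3 * hE0 + (r:ℂ) * hE1 + (r:ℂ)^2 * hE2 + (r:ℂ)^2 * hE3
  have hB : hinner (F2t t z) (F2t t z) = (3-(t:ℂ)) * (r:ℂ)^2 + (4-(t:ℂ)) * (r:ℂ) := by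
    simp only [hinner, F2t, Fin.sum_univ_four, Matrix.cons_val_zero, Matrix.cons_val_one,
      Matrix.head_cons, Matrix.cons_val_two, Matrix.tail_cons, Matrix.cons_val_three,
      map_mul, map_pow, map_zero, Complex.conj_ofReal, mul_zero, zero_mul, add_zero]
    linear_combination ((Real.sqrt (3-t) : ℝ):ℂ)^2 * hz 2 + ((Real.sqrt (4-t) : ℝ):ℂ)^2 * hz 1 +
      (r:ℂ)^2 * hE4 + (r:ℂ) * hE5
  have hg : hinner (F1t t z) (F2t t z) =
      ((Real.sqrt (3-t) * |t-2| : ℝ) : ℂ) * (z^3 * (starRingEnd ℂ) z^2 + z^2 * (starRingEnd ℂ) z) := by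
    simp only [hinner, F1t, F2t, Fin.sum_univ_four, Matrix.cons_val_zero, Matrix.cons_val_one,
      Matrix.head_cons, Matrix.cons_val_two, Matrix.tail_cons, Matrix.cons_val_three,
      map_mul, map_pow, map_zero, Complex.conj_ofReal, mul_zero, zero_mul, add_zero]
    push_cast [← hs6]
    ring
  have hC : hinner (F1t t z) (F2t t z) * (starRingEnd ℂ) (hinner (F1t t z) (F2t t z)) =
      (3-(t:ℂ)) * ((t:ℂ)-2)^2 * (r:ℂ)^3 * (1+(r:ℂ))^2 := by
    rw [hg]
    simp only [map_mul, map_add, map_pow, Complex.conj_ofReal, Complex.conj_conj]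
    linear_combination ((Real.sqrt (3-t) * |t-2| : ℝ):ℂ)^2 * (hz 5 + 2 * hz 4 + hz 3) +
      ((r:ℂ)^3 + 2*(r:ℂ)^4 + (r:ℂ)^5) * hE6
  rw [hA, hB, hC]
  have h4c : (4:ℂ) - (t:ℂ) ≠ 0 := by
    intro h
    have : (4:ℝ) - t = 0 := by exact_mod_cast congrArg Complex.re h
    linarith
  field_simp
  ring
end

section
/- For every t ∈ (0,3] and every z ∈ ℂ, one has Gram(v₁ᵗ(z), v₂ᵗ(z), (v₁ᵗ)′(z), (v₂ᵗ)′(z)) = (4t − t²)·(1+|z|²)⁴, where ′ = d/dz. (That is, each member of the family (1.2) satisfies condition (B)_{4,c} with c = 4t − t², so it has constant squared norm of the second fundamental form S = 8 − c − 2 = t² − 4t + 6.) -/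
open scoped BigOperators
open Complex

lemma detFour {R : Type*} [CommRing R] (M : Matrix (Fin 4) (Fin 4) R) :
    M.det = M 0 0 * M 1 1 * M 2 2 * M 3 3 - M 0 0 * M 1 1 * M 2 3 * M 3 2 - M 0 0 * M 1 2 * M 2 1 * M 3 3 + M 0 0 * M 1 2 * M 2 3 * M 3 1 + M 0 0 * M 1 3 * M 2 1 * M 3 2 - M 0 0 * M 1 3 * M 2 2 * M 3 1 - M 0 1 * M 1 0 * M 2 2 * M 3 3 + M 0 1 * M 1 0 * M 2 3 * M 3 2 + M 0 1 * M 1 2 * M 2 0 * M 3 3 - M 0 1 * M 1 2 * M 2 3 * M 3 0 - M 0 1 * M 1 3 * M 2 0 * M 3 2 + M 0 1 * M 1 3 * M 2 2 * M 3 0 + M 0 2 * M 1 0 * M 2 1 * M 3 3 - M 0 2 * M 1 0 * M 2 3 * M 3 1 - M 0 2 * M 1 1 * M 2 0 * M 3 3 + M 0 2 * M 1 1 * M 2 3 * M 3 0 + M 0 2 * M 1 3 * M 2 0 * M 3 1 - M 0 2 * M 1 3 * M 2 1 * M 3 0 - M 0 3 * M 1 0 * M 2 1 * M 3 2 + M 0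 3 * M 1 0 * M 2 2 * M 3 1 + M 0 3 * M 1 1 * M 2 0 * M 3 2 - M 0 3 * M 1 1 * M 2 2 * M 3 0 - M 0 3 * M 1 2 * M 2 0 * M 3 1 + M 0 3 * M 1 2 * M 2 1 * M 3 0 := by
  rw [Matrix.det_succ_row_zero]
  simp [Fin.sum_univ_succ, Matrix.det_fin_three, Matrix.submatrix, Fin.succAbove,
    show (Fin.succ 2 : Fin 4) = 3 from rfl, show (Fin.castSucc 2 : Fin 4) = 2 from rfl,
    show ((1:Fin 4) < 3) = True from by decide]
  ring


lemma hasDerivAt_v1t (t : ℝ) (z : ℂ) :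
    HasDerivAt (v1t t)
      ![(0 : ℂ), 0, ((|t - 2| : ℝ) : ℂ) * (3 * z ^ 2), ((Real.sqrt t : ℝ) : ℂ),
        ((Real.sqrt ((3 - t) / (4 - t)) * |t - 2| : ℝ) : ℂ) * (2 * z),
        ((Real.sqrt (t / (4 - t)) : ℝ) : ℂ) * (2 * z)] z := by
  rw [hasDerivAt_pi]
  intro i
  fin_cases i <;>
    simp only [v1t, vOne, F1t, Fin.cons_zero, Fin.cons_succ, Matrix.cons_val_zero,
      Matrix.cons_val_one, Matrix.head_cons, Matrix.cons_val', Matrix.cons_val_fin_one,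
      Matrix.empty_val', Fin.mk_zero, Fin.mk_one, Fin.isValue]
  · exact hasDerivAt_const z 1
  · exact hasDerivAt_const z 0
  · simpa using ((hasDerivAt_pow 3 z).const_mul ((|t - 2| : ℝ) : ℂ))
  · simpa using ((hasDerivAt_id z).const_mul ((Real.sqrt t : ℝ) : ℂ))
  · simpa using ((hasDerivAt_pow 2 z).const_mul
      ((Real.sqrt ((3 - t) / (4 - t)) * |t - 2| : ℝ) : ℂ))
  · simpa using ((hasDerivAt_pow 2 z).const_mul ((Real.sqrt (t / (4 - t)) : ℝ) : ℂ))

lemma hasDerivAt_v2t (t : ℝ) (z : ℂ) :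
    HasDerivAt (v2t t)
      ![(0 : ℂ), 0, ((Real.sqrt (3 - t) : ℝ) : ℂ) * (2 * z), 0,
        ((Real.sqrt (4 - t) : ℝ) : ℂ), 0] z := by
  rw [hasDerivAt_pi]
  intro i
  fin_cases i <;>
    simp only [v2t, vTwo, F2t, Fin.cons_zero, Fin.cons_succ, Matrix.cons_val_zero,
      Matrix.cons_val_one, Matrix.head_cons, Matrix.cons_val', Matrix.cons_val_fin_one,
      Matrix.empty_val', Fin.mk_zero, Fin.mk_one, Fin.isValue]
  · exact hasDerivAt_const z 0
  · exact hasDerivAt_const z 1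
  · simpa using ((hasDerivAt_pow 2 z).const_mul ((Real.sqrt (3 - t) : ℝ) : ℂ))
  · exact hasDerivAt_const z 0
  · simpa using ((hasDerivAt_id z).const_mul ((Real.sqrt (4 - t) : ℝ) : ℂ))
  · exact hasDerivAt_const z 0

theorem stmt12 (t : ℝ) (ht : t ∈ Set.Ioc (0 : ℝ) 3) (z : ℂ) :
    gram ![v1t t z, v2t t z, deriv (v1t t) z, deriv (v2t t) z] =
      ((4 * t - t ^ 2 : ℝ) : ℂ) * (1 + (Complex.normSq z : ℂ)) ^ 4 := by
  obtain ⟨ht0, ht3⟩ := ht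
  have h4 : (0:ℝ) < 4 - t := by linarith
  have h3 : (0:ℝ) ≤ 3 - t := by linarith
  have h4C : ((4:ℂ) - (t:ℂ)) ≠ 0 := by
    intro h
    have : ((4 - t : ℝ) : ℂ) = 0 := by push_cast; linear_combination h
    exact (ne_of_gt h4) (by exact_mod_cast this)
  rw [(hasDerivAt_v1t t z).deriv, (hasDerivAt_v2t t z).deriv]
  rw [show ((Complex.normSq z : ℝ) : ℂ) = z * (starRingEnd ℂ) z from (Complex.mul_conj z).symm]
  simp only [gram]
  rw [detFour]
  simp only [Matrix.of_apply, Matrix.cons_val', Matrix.cons_val_zero, Matrix.cons_val_one,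
    Matrix.head_cons, Matrix.cons_val_two, Matrix.cons_val_three, Matrix.tail_cons,
    Matrix.empty_val', Matrix.cons_val_fin_one, Matrix.head_fin_const]
  simp only [hinner, v1t, v2t, vOne, vTwo, F1t, F2t, Fin.sum_univ_succ, Fin.sum_univ_zero,
    Fin.cons_zero, Fin.cons_succ, Matrix.cons_val_zero, Matrix.cons_val_succ,
    map_mul, map_pow, map_one, map_zero, map_ofNat, Complex.conj_ofReal, Complex.ofReal_mul,
    mul_zero, zero_mul, mul_one, one_mul, add_zero, zero_add]
  set w := (starRingEnd ℂ) z with hw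
  set A := ((|t - 2| : ℝ) : ℂ) with hA
  set B := ((Real.sqrt t : ℝ) : ℂ) with hB
  set C := ((Real.sqrt ((3 - t) / (4 - t)) : ℝ) : ℂ) with hC
  set D := ((Real.sqrt (t / (4 - t)) : ℝ) : ℂ) with hD
  set E := ((Real.sqrt (3 - t) : ℝ) : ℂ) with hE
  set F := ((Real.sqrt (4 - t) : ℝ) : ℂ) with hF
  set J := ((4:ℂ) - (t:ℂ))⁻¹ with hJdef
  have hb : B ^ 2 = (t:ℂ) := by
    rw [hB, ← Complex.ofReal_pow, Real.sq_sqrt ht0.le]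
  have he : E ^ 2 = (3:ℂ) - (t:ℂ) := by
    rw [hE, ← Complex.ofReal_pow, Real.sq_sqrt h3]; push_cast; ring
  have hf : F ^ 2 = (4:ℂ) - (t:ℂ) := by
    rw [hF, ← Complex.ofReal_pow, Real.sq_sqrt h4.le]; push_cast; ring
  have ha : A ^ 2 = ((t:ℂ) - 2) ^ 2 := by
    rw [hA, ← Complex.ofReal_pow, _root_.sq_abs]; push_cast; ring
  have hc0 : C ^ 2 = ((3:ℂ) - (t:ℂ)) * J := by
    rw [hC, ← Complex.ofReal_pow, Real.sq_sqrt (div_nonneg h3 h4.le), hJdef]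
    push_cast
    rw [div_eq_mul_inv]
  have hd : D ^ 2 = (t:ℂ) * J := by
    rw [hD, ← Complex.ofReal_pow, Real.sq_sqrt (div_nonneg ht0.le h4.le), hJdef]
    push_cast
    rw [div_eq_mul_inv]
  have hcf : C * F = E := by
    rw [hC, hF, hE, ← Complex.ofReal_mul]
    congr 1
    rw [← Real.sqrt_mul (div_nonneg h3 h4.le), div_mul_cancel₀ _ (ne_of_gt h4)]
  have hJ : ((4:ℂ) - (t:ℂ)) * J = 1 := mul_inv_cancel₀ h4C
  push_cast
  linear_combination
    ((-24)*z^2*w^2*A^2*E + (-8)*z^3*w^3*A^2*B^2*E) * hcf +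
    ((1)*F^2 + (4)*z*w*E^2 + (1)*z^2*w^2*E^2*F^2 + (1)*z^2*w^2*D^2*F^2 + (4)*z^3*w^3*D^2*E^2 + (4)*z^3*w^3*A^2*F^2 + (-8)*z^3*w^3*A^2*E^2 + (4)*z^3*w^3*A^2*C^2*E^2 + (1)*z^4*w^4*D^2*E^2*F^2) * hb +
    ((4)*z*w*F^2 + (16)*z^2*w^2*E^2 + (4)*z^3*w^3*E^2*F^2 + (1)*z^4*w^4*A^2*F^2 + (1)*(t:ℂ)*z^2*w^2*F^2 + (4)*(t:ℂ)*z^3*w^3*E^2 + (1)*(t:ℂ)*z^4*w^4*E^2*F^2) * hd +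
    ((9)*z^2*w^2*F^2 + (-24)*z^2*w^2*E^2 + (16)*z^2*w^2*C^2*E^2 + (4)*(t:ℂ)*z^3*w^3*F^2 + (-8)*(t:ℂ)*z^3*w^3*E^2 + (4)*(t:ℂ)*z^3*w^3*C^2*E^2 + (1)*(t:ℂ)*z^4*w^4*F^2*J) * ha +
    ((64)*z^2*w^2*E^2 + (-64)*(t:ℂ)*z^2*w^2*E^2 + (16)*(t:ℂ)*z^3*w^3*E^2 + (16)*(t:ℂ)^2*z^2*w^2*E^2 + (-16)*(t:ℂ)^2*z^3*w^3*E^2 + (4)*(t:ℂ)^3*z^3*w^3*E^2) * hc0 +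
    ((-96)*z^2*w^2 + (192)*z^2*w^2*J + (4)*(t:ℂ)*z*w + (96)*(t:ℂ)*z^2*w^2 + (-240)*(t:ℂ)*z^2*w^2*J + (1)*(t:ℂ)*z^2*w^2*F^2 + (-32)*(t:ℂ)*z^3*w^3 + (48)*(t:ℂ)*z^3*w^3*J + (4)*(t:ℂ)*z^3*w^3*F^2*J + (-24)*(t:ℂ)^2*z^2*w^2 + (112)*(t:ℂ)^2*z^2*w^2*J + (32)*(t:ℂ)^2*z^3*w^3 + (-60)*(t:ℂ)^2*z^3*w^3*J + (1)*(t:ℂ)^2*z^4*w^4*F^2*J + (-16)*(t:ℂ)^3*z^2*w^2*J + (-8)*(t:ℂ)^3*z^3*w^3 + (28)*(t:ℂ)^3*z^3*w^3*J + (-4)*(t:ℂ)^4*z^3*w^3*J) * he +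
    ((36)*z^2*w^2 + (1)*(t:ℂ) + (4)*(t:ℂ)*z*w*J + (-33)*(t:ℂ)*z^2*w^2 + (16)*(t:ℂ)*z^3*w^3 + (12)*(t:ℂ)*z^3*w^3*J + (4)*(t:ℂ)*z^4*w^4*J + (8)*(t:ℂ)^2*z^2*w^2 + (1)*(t:ℂ)^2*z^2*w^2*J + (-16)*(t:ℂ)^2*z^3*w^3 + (-4)*(t:ℂ)^2*z^3*w^3*J + (-1)*(t:ℂ)^2*z^4*w^4*J + (4)*(t:ℂ)^3*z^3*w^3) * hf +
    ((144)*z^2*w^2 + (4)*(t:ℂ)*z*w + (-192)*(t:ℂ)*z^2*w^2 + (48)*(t:ℂ)*z^3*w^3 + (4)*(t:ℂ)*z^4*w^4 + (97)*(t:ℂ)^2*z^2*w^2 + (-52)*(t:ℂ)^2*z^3*w^3 + (-1)*(t:ℂ)^2*z^4*w^4 + (-16)*(t:ℂ)^3*z^2*w^2 + (24)*(t:ℂ)^3*z^3*w^3 + (-4)*(t:ℂ)^4*z^3*w^3) * hJ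
end

section
/- Define v₁(z) = (1, 0, z/√2, (√31/(2√7))·z², (9/(2√7))·z², 0) ∈ ℂ⁶ and v₂(z) = (0, 1, 0, 0, (√7/√2)·z, z²/2) ∈ ℂ⁶. Then for every z ∈ ℂ, Gram(v₁(z), v₂(z), v₁′(z), v₂′(z)) = (112 + 1024·|z|² + 1176·|z|⁴ + 376·|z|⁶ + 31·|z|⁸)/64, where ′ = d/dz. In particular, there is no constant c such that Gram(v₁(z), v₂(z), v₁′(z), v₂′(z)) = c·(1+|z|²)⁴ for all z ∈ ℂ (so this degree-4 constantly curved holomorphic two-sphere in G(2,6) does not have constant squared norm of the second fundamental form). -/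
open scoped BigOperators
open Complex

noncomputable def jv1 (z : ℂ) : Fin 6 → ℂ :=
  ![1, 0, z / (Real.sqrt 2 : ℝ), ((Real.sqrt 31 / (2 * Real.sqrt 7) : ℝ) : ℂ) * z ^ 2,
    ((9 / (2 * Real.sqrt 7) : ℝ) : ℂ) * z ^ 2, 0]

noncomputable def jv2 (z : ℂ) : Fin 6 → ℂ :=
  ![0, 1, 0, 0, ((Real.sqrt 7 / Real.sqrt 2 : ℝ) : ℂ) * z, z ^ 2 / 2]

lemma det4 (M : Matrix (Fin 4) (Fin 4) ℂ) :
    M.det =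
      M 0 0 * M 1 1 * M 2 2 * M 3 3 - M 0 0 * M 1 1 * M 2 3 * M 3 2
      - M 0 0 * M 1 2 * M 2 1 * M 3 3 + M 0 0 * M 1 2 * M 2 3 * M 3 1
      + M 0 0 * M 1 3 * M 2 1 * M 3 2 - M 0 0 * M 1 3 * M 2 2 * M 3 1
      - M 0 1 * M 1 0 * M 2 2 * M 3 3 + M 0 1 * M 1 0 * M 2 3 * M 3 2
      + M 0 1 * M 1 2 * M 2 0 * M 3 3 - M 0 1 * M 1 2 * M 2 3 * M 3 0
      - M 0 1 * M 1 3 * M 2 0 * M 3 2 + M 0 1 * M 1 3 * M 2 2 * M 3 0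
      + M 0 2 * M 1 0 * M 2 1 * M 3 3 - M 0 2 * M 1 0 * M 2 3 * M 3 1
      - M 0 2 * M 1 1 * M 2 0 * M 3 3 + M 0 2 * M 1 1 * M 2 3 * M 3 0
      + M 0 2 * M 1 3 * M 2 0 * M 3 1 - M 0 2 * M 1 3 * M 2 1 * M 3 0
      - M 0 3 * M 1 0 * M 2 1 * M 3 2 + M 0 3 * M 1 0 * M 2 2 * M 3 1
      + M 0 3 * M 1 1 * M 2 0 * M 3 2 - M 0 3 * M 1 1 * M 2 2 * M 3 0
      - M 0 3 * M 1 2 * M 2 0 * M 3 1 + M 0 3 * M 1 2 * M 2 1 * M 3 0 := by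
  have h3 : (Fin.succ 2 : Fin 4) = 3 := rfl
  have h2 : (Fin.castSucc 2 : Fin 4) = 2 := rfl
  simp [Matrix.det_succ_row_zero, Fin.sum_univ_succ, Fin.succAbove, h3, h2]
  ring

lemma jv1_hasDeriv (z : ℂ) :
    HasDerivAt jv1 ![0, 0, (((Real.sqrt 2 : ℝ) : ℂ))⁻¹,
      ((Real.sqrt 31 / (2 * Real.sqrt 7) : ℝ) : ℂ) * (2 * z),
      ((9 / (2 * Real.sqrt 7) : ℝ) : ℂ) * (2 * z), 0] z := by
  rw [hasDerivAt_pi]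
  intro i
  fin_cases i <;>
    simp only [jv1, Matrix.cons_val_zero, Matrix.cons_val_one, Matrix.head_cons,
      Matrix.cons_val_two, Matrix.tail_cons, Matrix.cons_val_three, Matrix.cons_val_four,
      Matrix.cons_val_fin_one, Fin.mk_zero, Fin.mk_one, Fin.isValue]
  · exact hasDerivAt_const z 1
  · exact hasDerivAt_const z 0
  · simpa [div_eq_mul_inv] using (hasDerivAt_id z).div_const ((Real.sqrt 2 : ℝ) : ℂ)
  · simpa [mul_comm, mul_assoc, mul_left_comm] using
      ((hasDerivAt_pow 2 z).const_mul (((Real.sqrt 31 / (2 * Real.sqrt 7) : ℝ)) : ℂ))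
  · simpa [mul_comm, mul_assoc, mul_left_comm] using
      ((hasDerivAt_pow 2 z).const_mul (((9 / (2 * Real.sqrt 7) : ℝ)) : ℂ))
  · exact hasDerivAt_const z 0

lemma jv2_hasDeriv (z : ℂ) :
    HasDerivAt jv2 ![0, 0, 0, 0, ((Real.sqrt 7 / Real.sqrt 2 : ℝ) : ℂ), z] z := by
  rw [hasDerivAt_pi]
  intro i
  fin_cases i <;>
    simp only [jv2, Matrix.cons_val_zero, Matrix.cons_val_one, Matrix.head_cons,
      Matrix.cons_val_two, Matrix.tail_cons, Matrix.cons_val_three, Matrix.cons_val_four,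
      Matrix.cons_val_fin_one, Fin.mk_zero, Fin.mk_one, Fin.isValue]
  · exact hasDerivAt_const z 0
  · exact hasDerivAt_const z 1
  · exact hasDerivAt_const z 0
  · exact hasDerivAt_const z 0
  · simpa using (hasDerivAt_id z).const_mul (((Real.sqrt 7 / Real.sqrt 2 : ℝ)) : ℂ)
  · show HasDerivAt (fun x : ℂ => x ^ 2 / 2) z z
    simpa using (hasDerivAt_pow 2 z).div_const 2

lemma gram_jv : ∀ z : ℂ,
    gram ![jv1 z, jv2 z, deriv jv1 z, deriv jv2 z] =
      ((112 + 1024 * Complex.normSq z + 1176 * Complex.normSq z ^ 2 +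
          376 * Complex.normSq z ^ 3 + 31 * Complex.normSq z ^ 4 : ℝ) : ℂ) / 64 := by
  intro z
  have ha : ((Real.sqrt 2 : ℝ) : ℂ) ^ 2 = 2 := by
    rw [← Complex.ofReal_pow, Real.sq_sqrt (by norm_num : (0:ℝ) ≤ 2)]; norm_num
  have hb : ((Real.sqrt 7 : ℝ) : ℂ) ^ 2 = 7 := by
    rw [← Complex.ofReal_pow, Real.sq_sqrt (by norm_num : (0:ℝ) ≤ 7)]; norm_num
  have hc : ((Real.sqrt 31 : ℝ) : ℂ) ^ 2 = 31 := by
    rw [← Complex.ofReal_pow, Real.sq_sqrt (by norm_num : (0:ℝ) ≤ 31)]; norm_num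
  have ha0 : ((Real.sqrt 2 : ℝ) : ℂ) ≠ 0 := by
    simpa using Real.sqrt_ne_zero'.mpr (by norm_num : (0:ℝ) < 2)
  have hb0 : ((Real.sqrt 7 : ℝ) : ℂ) ≠ 0 := by
    simpa using Real.sqrt_ne_zero'.mpr (by norm_num : (0:ℝ) < 7)
  have hainv : (((Real.sqrt 2 : ℝ) : ℂ))⁻¹ = ((Real.sqrt 2 : ℝ) : ℂ) * (2:ℂ)⁻¹ := by
    field_simp
    linear_combination -ha
  have hbinv : (((Real.sqrt 7 : ℝ) : ℂ))⁻¹ = ((Real.sqrt 7 : ℝ) : ℂ) * (7:ℂ)⁻¹ := by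
    field_simp
    linear_combination -hb
  rw [(jv1_hasDeriv z).deriv, (jv2_hasDeriv z).deriv]
  simp only [gram]
  rw [det4]
  simp only [Matrix.of_apply, Matrix.cons_val_zero, Matrix.cons_val_one, Matrix.head_cons,
    Matrix.cons_val_two, Matrix.tail_cons, Matrix.cons_val_three]
  simp only [hinner, Fin.sum_univ_succ, Fin.sum_univ_zero, Matrix.cons_val_zero,
    Matrix.cons_val_succ, jv1, jv2, map_mul, map_pow, map_inv₀, map_div₀, map_ofNat, Complex.conj_ofReal,
    map_zero, map_one, mul_zero, zero_mul, add_zero, zero_add, mul_one, one_mul]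
  push_cast
  simp only [← Complex.mul_conj]
  simp only [div_eq_mul_inv, mul_inv, hainv, hbinv]
  linear_combination ((7/8 : ℂ) + (8 : ℂ) * z * ((starRingEnd ℂ) z) + (19/16 : ℂ) * z^2 * ((starRingEnd ℂ) z)^2 + (47/16 : ℂ) * z^3 * ((starRingEnd ℂ) z)^3 + (31/128 : ℂ) * z^4 * ((starRingEnd ℂ) z)^4 + (7/16 : ℂ) * ((Real.sqrt 2 : ℝ) : ℂ)^2 + (19/32 : ℂ) * ((Real.sqrt 2 : ℝ) : ℂ)^2 * z^2 * ((starRingEnd ℂ) z)^2 + (31/256 : ℂ) * ((Real.sqrt 2 : ℝ) : ℂ)^2 * z^4 * ((starRingEnd ℂ) z)^4) * ha + ((16/7 : ℂ) * z^2 * ((starRingEnd ℂ) z)^2 + (31/28 : ℂ) * ((Real.sqrt 2 : ℝ) : ℂ)^2 * z * ((starRingEnd ℂ) z) + (47/112 : ℂ) * ((Real.sqrt 2 : ℝ) : ℂ)^2 * z^3 * ((starRingEnd ℂ) z)^3 + (31/196 : ℂ) * ((Real.sqrt 2 : ℝ) : ℂ)^2 * ((Real.sqrt 7 : ℝ) :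 ℂ)^2 * z * ((starRingEnd ℂ) z) + (31/784 : ℂ) * ((Real.sqrt 2 : ℝ) : ℂ)^2 * ((Real.sqrt 7 : ℝ) : ℂ)^2 * z^3 * ((starRingEnd ℂ) z)^3 + (1/16 : ℂ) * ((Real.sqrt 2 : ℝ) : ℂ)^4 + (19/224 : ℂ) * ((Real.sqrt 2 : ℝ) : ℂ)^4 * z^2 * ((starRingEnd ℂ) z)^2 + (31/1792 : ℂ) * ((Real.sqrt 2 : ℝ) : ℂ)^4 * z^4 * ((starRingEnd ℂ) z)^4 + (31/3136 : ℂ) * ((Real.sqrt 2 : ℝ) : ℂ)^4 * ((Real.sqrt 7 : ℝ) : ℂ)^2 * z^2 * ((starRingEnd ℂ) z)^2 + (31/12544 : ℂ) * ((Real.sqrt 2 : ℝ) : ℂ)^4 * ((Real.sqrt 7 : ℝ) : ℂ)^2 * z^4 * ((starRingEnd ℂ) z)^4) * hb + ((1/49 : ℂ) * ((Real.sqrt 7 : ℝ) : ℂ)^2 * z^2 * ((starRingEnd ℂ) z)^2 + (1/784 : ℂ) * ((Real.sqrt 2 : ℝ) : ℂ)^2 * ((Real.sqrt 7 : ℝ)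 : ℂ)^2 * z^3 * ((starRingEnd ℂ) z)^3 + (1/196 : ℂ) * ((Real.sqrt 2 : ℝ) : ℂ)^2 * ((Real.sqrt 7 : ℝ) : ℂ)^4 * z * ((starRingEnd ℂ) z) + (1/784 : ℂ) * ((Real.sqrt 2 : ℝ) : ℂ)^2 * ((Real.sqrt 7 : ℝ) : ℂ)^4 * z^3 * ((starRingEnd ℂ) z)^3 + (1/3136 : ℂ) * ((Real.sqrt 2 : ℝ) : ℂ)^4 * ((Real.sqrt 7 : ℝ) : ℂ)^4 * z^2 * ((starRingEnd ℂ) z)^2 + (1/12544 : ℂ) * ((Real.sqrt 2 : ℝ) : ℂ)^4 * ((Real.sqrt 7 : ℝ) : ℂ)^4 * z^4 * ((starRingEnd ℂ) z)^4) * hc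

theorem stmt17 :
    (∀ z : ℂ,
      gram ![jv1 z, jv2 z, deriv jv1 z, deriv jv2 z] =
        ((112 + 1024 * Complex.normSq z + 1176 * Complex.normSq z ^ 2 +
            376 * Complex.normSq z ^ 3 + 31 * Complex.normSq z ^ 4 : ℝ) : ℂ) / 64) ∧
    ¬∃ c : ℂ, ∀ z : ℂ,
        gram ![jv1 z, jv2 z, deriv jv1 z, deriv jv2 z] =
          c * (1 + (Complex.normSq z : ℂ)) ^ 4 := by
  refine ⟨gram_jv, ?_⟩
  rintro ⟨c, hcond⟩
  have h0 := hcond 0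
  have h1 := hcond 1
  rw [gram_jv] at h0 h1
  simp [Complex.normSq_apply] at h0 h1
  have hcv : c = 112 / 64 := h0.symm
  subst hcv
  norm_num at h1
end

section
/- Let w⁽⁵⁾ : ℂ → ℂ⁶ be defined by w⁽⁵⁾(z) = (√C(5,p)·z^{p−1}·(p − (5−p)|z|²))_{p=0,…,5} (so its p = 0 entry is −5·conj(z)), and let V₀⁽⁵⁾(z) = (√C(5,k)·z^k)_{k=0,…,5}. Then for every z ∈ ℂ: (i) ⟨V₀⁽⁵⁾(z), w⁽⁵⁾(z)⟩ = 0, and (ii) ‖w⁽⁵⁾(z)‖² = 5·(1+|z|²)⁵. (In particular V₀⁽⁵⁾(z) and w⁽⁵⁾(z) are linearly independent for every z, so z ↦ span{V₀⁽⁵⁾(z), w⁽⁵⁾(z)} is a well-defined map into the Grassmannian G(2,6); it is the holomorphic curve V₀⁽⁵⁾ ⊕ V₁⁽⁵⁾ appearing in the reducible classification.) -/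
/-! Every entry of `V05 z` and of `w5 z` carries the same real factor `√C(5,p)`, so both Hermitian
products are binomially weighted sums without square roots, hence polynomial identities in `z`
and `conj z` (with `normSq z = z * conj z`). -/

open scoped BigOperators
open Complex

noncomputable def V05 (z : ℂ) : Fin 6 → ℂ :=
  fun k => (Real.sqrt (Nat.choose 5 (k : ℕ)) : ℝ) * z ^ (k : ℕ)

noncomputable def w5 (z : ℂ) : Fin 6 → ℂ :=
  fun p =>
    if p = 0 then -5 * (starRingEnd ℂ) z
    else (Real.sqrt (Nat.choose 5 (p : ℕ)) : ℝ) * z ^ ((p : ℕ) - 1) *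
      (((p : ℕ) : ℂ) - ((5 - (p : ℕ) : ℕ) : ℂ) * (Complex.normSq z : ℂ))

lemma hinner_sqrt_mul_sqrt_mul {m : ℕ} (c : Fin m → ℝ) (hc : ∀ i, 0 ≤ c i) (a b : Fin m → ℂ) :
    hinner (fun i => (Real.sqrt (c i) : ℂ) * a i) (fun i => (Real.sqrt (c i) : ℂ) * b i) =
      ∑ i, (c i : ℂ) * (a i * starRingEnd ℂ (b i)) := by
  refine Finset.sum_congr rfl fun i _ => ?_
  have hsq : (Real.sqrt (c i) : ℂ) * Real.sqrt (c i) = c i := by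
    rw [← Complex.ofReal_mul, Real.mul_self_sqrt (hc i)]
  rw [map_mul, Complex.conj_ofReal, ← hsq]
  ring

lemma sum_fin_six_choose_five_mul (f : Fin 6 → ℂ) :
    ∑ i : Fin 6, ((Nat.choose 5 i : ℝ) : ℂ) * f i =
      f 0 + 5 * f 1 + 10 * f 2 + 10 * f 3 + 5 * f 4 + f 5 := by
  simp [Fin.sum_univ_six, Nat.choose]

lemma V05_eq (z : ℂ) :
    V05 z = fun k : Fin 6 => (Real.sqrt (Nat.choose 5 (k : ℕ)) : ℂ) *
      ![1, z, z ^ 2, z ^ 3, z ^ 4, z ^ 5] k := by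
  funext k
  fin_cases k <;> simp [V05]

lemma w5_eq (z : ℂ) :
    w5 z = fun p : Fin 6 => (Real.sqrt (Nat.choose 5 (p : ℕ)) : ℂ) *
      ![-5 * starRingEnd ℂ z, 1 - 4 * normSq z, z * (2 - 3 * normSq z),
        z ^ 2 * (3 - 2 * normSq z), z ^ 3 * (4 - normSq z), z ^ 4 * 5] p := by
  funext p
  fin_cases p <;> simp [w5, Nat.choose, mul_assoc]

theorem stmt19 (z : ℂ) :
    hinner (V05 z) (w5 z) = 0 ∧
      hinner (w5 z) (w5 z) = 5 * (1 + (Complex.normSq z : ℂ)) ^ 5 := by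
  have hnormSq : (normSq z : ℂ) = z * starRingEnd ℂ z := (mul_conj z).symm
  have hchoose : ∀ i, 0 ≤ ((Nat.choose 5 (i : Fin 6) : ℕ) : ℝ) := fun _ => Nat.cast_nonneg _
  rw [w5_eq]
  constructor
  · rw [V05_eq, hinner_sqrt_mul_sqrt_mul _ hchoose, sum_fin_six_choose_five_mul]
    simp only [Fin.isValue, Matrix.cons_val, hnormSq, map_mul, map_sub, map_neg, map_pow, map_one,
      map_ofNat, conj_conj]
    ring
  · rw [hinner_sqrt_mul_sqrt_mul _ hchoose, sum_fin_six_choose_five_mul]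
    simp only [Fin.isValue, Matrix.cons_val, hnormSq, map_mul, map_sub, map_neg, map_pow, map_one,
      map_ofNat, conj_conj]
    ring
end
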